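/- In the setting of the value iteration below, define for each k ≥ 0 the decision policy μ_{k+1}(P, P̄) = 1 (stop) if C(P, P̄) + Σ_{b∈{0,1}^L} q(b) · V_k(T(P, P̄, b)) ≥ 0, and μ_{k+1}(P, P̄) = 2 (continue) otherwise. Then μ_{k+1} is a monotone policy: if μ_{k+1}(P, P̄) = 2 and the state (P', P̄') satisfies P'_a ⪰ P_a, P̄'_a ⪯ P̄_a, and for every l ≠ a, P'_l ⪯ P_l and P̄'_l ⪰ P̄_l (Loewner order), then μ_{k+1}(P', P̄') = 2. Equivalently, μ_{k+1} is increasing in P_a and in P̄_l (l ≠ a), and decreasing in P̄_a and in P_l (l ≠ a). -/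

import Mathlib

open Matrix

/-- Riccati/Lyapunov covariance update for one target: with a received measurement
(`b = true`) this is the Riccati update, otherwise the Lyapunov (predictor) update. -/
noncomputable def kalmanUpdate {m p : ℕ}
    (F Q : Matrix (Fin m) (Fin m) ℝ) (H : Matrix (Fin p) (Fin m) ℝ)
    (R : Matrix (Fin p) (Fin p) ℝ) (P : Matrix (Fin m) (Fin m) ℝ) (b : Bool) :
    Matrix (Fin m) (Fin m) ℝ :=
  F * P * Fᵀ + Q - if b then F * P * Hᵀ * (H * P * Hᵀ + R)⁻¹ * H * P * Fᵀ else 0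

/-- Lyapunov (measurement-free predictor) covariance update. -/
noncomputable def lyapUpdate {m : ℕ}
    (F Q P : Matrix (Fin m) (Fin m) ℝ) : Matrix (Fin m) (Fin m) ℝ :=
  F * P * Fᵀ + Q

/-- Probability weight of a detection pattern `b : Fin L → Bool`. -/
noncomputable def detWeight {L : ℕ} (pd : Fin L → ℝ) (b : Fin L → Bool) : ℝ :=
  ∏ l, if b l then pd l else 1 - pd l

/-- Stopping cost `C̄(P, P̄)` (mutual-information based stochastic observability cost). -/
noncomputable def stopCost {L m : ℕ} (a : Fin L) (α β : Fin L → ℝ)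
    (P Pbar : Fin L → Matrix (Fin m) (Fin m) ℝ) : ℝ :=
  - α a * Real.log (Pbar a).det + β a * Real.log (P a).det
    + ∑ l ∈ Finset.univ.erase a,
        (α l * Real.log (Pbar l).det - β l * Real.log (P l).det)

/-- The one-step continuation cost
`C(P, P̄) = c − C̄(P, P̄) + Σ_b q(b) C̄(T(P, P̄, b))`. -/
noncomputable def contCost {L m p : ℕ} (a : Fin L) (α β : Fin L → ℝ) (c : ℝ)
    (F Q : Fin L → Matrix (Fin m) (Fin m) ℝ)
    (H : Fin L → Matrix (Fin p) (Fin m) ℝ)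
    (R : Fin L → Matrix (Fin p) (Fin p) ℝ) (pd : Fin L → ℝ)
    (P Pbar : Fin L → Matrix (Fin m) (Fin m) ℝ) : ℝ :=
  c - stopCost a α β P Pbar
    + ∑ b : Fin L → Bool,
        detWeight pd b *
          stopCost a α β
            (fun l => kalmanUpdate (F l) (Q l) (H l) (R l) (P l) (b l))
            (fun l => lyapUpdate (F l) (Q l) (Pbar l))

/-- The value iteration: `V_0 = −C̄` and
`V_{k+1}(P, P̄) = min{0, C(P, P̄) + Σ_b q(b) V_k(T(P, P̄, b))}`. -/
noncomputable def valIter {L m p : ℕ} (a : Fin L) (α β : Fin L → ℝ) (c : ℝ)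
    (F Q : Fin L → Matrix (Fin m) (Fin m) ℝ)
    (H : Fin L → Matrix (Fin p) (Fin m) ℝ)
    (R : Fin L → Matrix (Fin p) (Fin p) ℝ) (pd : Fin L → ℝ) :
    ℕ → (Fin L → Matrix (Fin m) (Fin m) ℝ) → (Fin L → Matrix (Fin m) (Fin m) ℝ) → ℝ
  | 0, P, Pbar => - stopCost a α β P Pbar
  | k + 1, P, Pbar =>
      min 0
        (contCost a α β c F Q H R pd P Pbar
          + ∑ b : Fin L → Bool,
              detWeight pd b *
                valIter a α β c F Q H R pd k
                  (fun l => kalmanUpdate (F l) (Q l) (H l) (R l) (P l) (b l))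
                  (fun l => lyapUpdate (F l) (Q l) (Pbar l)))

/-- The decision policy obtained after `k` value-iteration steps:
`μ_{k+1}(P, P̄) = 1` (stop) if `C(P, P̄) + Σ_b q(b) V_k(T(P, P̄, b)) ≥ 0`,
and `μ_{k+1}(P, P̄) = 2` (continue) otherwise. -/
noncomputable def valIterPolicy {L m p : ℕ} (a : Fin L) (α β : Fin L → ℝ) (c : ℝ)
    (F Q : Fin L → Matrix (Fin m) (Fin m) ℝ)
    (H : Fin L → Matrix (Fin p) (Fin m) ℝ)
    (R : Fin L → Matrix (Fin p) (Fin p) ℝ) (pd : Fin L → ℝ) (k : ℕ)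
    (P Pbar : Fin L → Matrix (Fin m) (Fin m) ℝ) : ℕ :=
  if 0 ≤ contCost a α β c F Q H R pd P Pbar
        + ∑ b : Fin L → Bool,
            detWeight pd b *
              valIter a α β c F Q H R pd k
                (fun l => kalmanUpdate (F l) (Q l) (H l) (R l) (P l) (b l))
                (fun l => lyapUpdate (F l) (Q l) (Pbar l))
  then 1 else 2

/-!
Write the continuation value as `c + Σ_b q(b) (C̄(T(P, P̄, b)) - C̄(P, P̄) + V_k(T(P, P̄, b)))`.
Along the order on states in which `C̄` increases, every summand decreases. For `V_k` this is
induction, since the Riccati and Lyapunov maps are monotone, so `T` preserves the order. For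
the one-step increment of `C̄` it is the identity
`log det Φ(P) - log det P = log det Q + log det R + log det (P⁻¹ + Hᵀ R⁻¹ H + Fᵀ Q⁻¹ F)
  - log det (H P Hᵀ + R)`,
whose right-hand side is antitone in `P` because inversion is antitone and `log det` monotone
in the Loewner order (a missed detection is the case `H = 0`). Hence the continuation value is
antitone, and continuing stays optimal at a larger state.
-/

open scoped MatrixOrder ComplexOrder

namespace Matrix

section LoewnerOrder

variable {m n 𝕜 : Type*} [Fintype m] [Fintype n] [DecidableEq n] [RCLike 𝕜]

omit [Fintype n] [DecidableEq n] in
lemma PosDef.of_le {A B : Matrix n n 𝕜} (hA : A.PosDef) (h : A ≤ B) : B.PosDef := by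
  simpa using hA.add_posSemidef h

/-- By Schur complements, `[[B, 1], [1, A⁻¹]] ⪰ 0` is equivalent both to `A ≤ B` and to
`B⁻¹ ≤ A⁻¹`. -/
lemma PosDef.inv_le_inv {A B : Matrix n n 𝕜} (hA : A.PosDef) (h : A ≤ B) : B⁻¹ ≤ A⁻¹ := by
  have hB := hA.of_le h
  let := hB.isUnit.invertible
  let := hA.inv.isUnit.invertible
  have hblock := (PosDef.fromBlocks₂₂ B 1 hA.inv).mpr <| by
    rwa [conjTranspose_one, Matrix.mul_one, Matrix.one_mul,
      nonsing_inv_nonsing_inv _ ((isUnit_iff_isUnit_det A).mp hA.isUnit)]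
  simpa [le_iff] using (PosDef.fromBlocks₁₁ 1 A⁻¹ hB).mp hblock

omit [DecidableEq n] in
lemma PosSemidef.mul_mul_transpose_same {A : Matrix n n ℝ} (hA : A.PosSemidef)
    (M : Matrix m n ℝ) : (M * A * Mᵀ).PosSemidef := by
  simpa using hA.mul_mul_conjTranspose_same M

omit [DecidableEq n] in
lemma PosSemidef.transpose_mul_mul_same {A : Matrix n n ℝ} (hA : A.PosSemidef)
    (M : Matrix n m ℝ) : (Mᵀ * A * M).PosSemidef := by
  simpa using hA.conjTranspose_mul_mul_same M

omit [DecidableEq n] in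
lemma mul_mul_transpose_le_mul_mul_transpose {A B : Matrix n n ℝ} (h : A ≤ B)
    (M : Matrix m n ℝ) : M * A * Mᵀ ≤ M * B * Mᵀ := by
  rw [le_iff, ← Matrix.sub_mul, ← Matrix.mul_sub]
  exact PosSemidef.mul_mul_transpose_same h M

/-- Every eigenvalue `⟪v, A v⟫` (for a unit eigenvector `v`) is at least `⟪v, v⟫ = 1`. -/
lemma one_le_det_of_one_le {A : Matrix n n ℝ} (h : 1 ≤ A) : 1 ≤ A.det := by
  have hA : A.IsHermitian := by simpa using h.isHermitian.add isHermitian_one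
  rw [hA.det_eq_prod_eigenvalues]
  refine Finset.one_le_prod fun i _ => ?_
  let v := hA.eigenvectorBasis i
  have hv : star ⇑v ⬝ᵥ ⇑v = 1 := by
    rw [dotProduct_comm, ← EuclideanSpace.inner_eq_star_dotProduct]
    simp [v, hA.eigenvectorBasis.orthonormal.1 i]
  have hquad := h.dotProduct_mulVec_nonneg v
  rw [sub_mulVec, dotProduct_sub, one_mulVec, hv, sub_nonneg] at hquad
  simpa [hA.eigenvalues_eq i] using hquad

/-- Conjugating by `S⁻¹` with `S = √A` reduces this to `1 ≤ S⁻¹ B S⁻¹`. -/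
lemma PosDef.det_le_det {A B : Matrix n n ℝ} (hA : A.PosDef) (h : A ≤ B) : A.det ≤ B.det := by
  set S := CFC.sqrt A
  have hSS : S * S = A := CFC.sqrt_mul_sqrt_self A hA.posSemidef.nonneg
  have hS : IsUnit S.det := (isUnit_iff_isUnit_det S).mp <|
    isUnit_of_mul_isUnit_left (hSS ▸ hA.isUnit)
  have hstar : star S⁻¹ = S⁻¹ := by
    rw [star_eq_conjTranspose, conjTranspose_nonsing_inv, ← star_eq_conjTranspose,
      (CFC.sqrt_nonneg A).isSelfAdjoint.star_eq]
  have hE : 1 ≤ S⁻¹ * B * S⁻¹ := by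
    have := star_left_conjugate_le_conjugate h S⁻¹
    rwa [hstar, ← hSS, ← Matrix.mul_assoc, nonsing_inv_mul _ hS, Matrix.one_mul,
      mul_nonsing_inv _ hS] at this
  have hB : B = S * (S⁻¹ * B * S⁻¹) * S := by
    rw [← Matrix.mul_assoc, ← Matrix.mul_assoc, mul_nonsing_inv _ hS, Matrix.one_mul,
      nonsing_inv_mul_cancel_right _ _ hS]
  calc A.det = A.det * 1 := (mul_one _).symm
    _ ≤ A.det * (S⁻¹ * B * S⁻¹).det :=
      mul_le_mul_of_nonneg_left (one_le_det_of_one_le hE) hA.det_pos.le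
    _ = (S * (S⁻¹ * B * S⁻¹) * S).det := by rw [← hSS]; simp only [det_mul]; ring
    _ = B.det := by rw [← hB]

lemma PosDef.log_det_le_log_det {A B : Matrix n n ℝ} (hA : A.PosDef) (h : A ≤ B) :
    Real.log A.det ≤ Real.log B.det :=
  Real.log_le_log hA.det_pos (hA.det_le_det h)

end LoewnerOrder

section Determinants

variable {m n p : Type*} [Fintype m] [Fintype n] [Fintype p]
  [DecidableEq m] [DecidableEq n] [DecidableEq p]

lemma det_mul_mul_add {α : Type*} [CommRing α] {A : Matrix m m α} {X : Matrix n n α}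
    (hA : IsUnit A.det) (hX : IsUnit X.det) (U : Matrix m n α) (V : Matrix n m α) :
    (U * X * V + A).det = A.det * X.det * (X⁻¹ + V * A⁻¹ * U).det := by
  have hfactor : 1 + X * V * A⁻¹ * U = X * (X⁻¹ + V * A⁻¹ * U) := by
    rw [Matrix.mul_add, mul_nonsing_inv _ hX]
    simp only [Matrix.mul_assoc]
  rw [add_comm, Matrix.mul_assoc, det_add_mul U (X * V) hA, hfactor, det_mul, mul_assoc]

lemma PosDef.isUnit_det {A : Matrix n n ℝ} (hA : A.PosDef) : IsUnit A.det :=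
  hA.det_pos.ne'.isUnit

lemma inv_add_transpose_mul_mul {P : Matrix n n ℝ} {R : Matrix p p ℝ} (hP : P.PosDef)
    (hR : R.PosDef) (H : Matrix p n ℝ) :
    (P⁻¹ + Hᵀ * R⁻¹ * H)⁻¹ = P - P * Hᵀ * (H * P * Hᵀ + R)⁻¹ * H * P := by
  have hS : (R + H * P * Hᵀ).PosDef := hR.add_posSemidef (hP.posSemidef.mul_mul_transpose_same H)
  have hwoodbury := add_mul_mul_inv_eq_sub P⁻¹ Hᵀ R⁻¹ H hP.inv.isUnit hR.inv.isUnit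
  simp only [nonsing_inv_nonsing_inv _ hP.isUnit_det, nonsing_inv_nonsing_inv _ hR.isUnit_det]
    at hwoodbury
  rw [hwoodbury hS.isUnit, add_comm R]

/-- Expand both determinants by `det_mul_mul_add`; the factor `det (P⁻¹ + Hᵀ R⁻¹ H)` cancels. -/
lemma log_det_mul_inv_add_mul_transpose_add {P : Matrix n n ℝ} {Q : Matrix m m ℝ}
    {R : Matrix p p ℝ} (hP : P.PosDef) (hQ : Q.PosDef) (hR : R.PosDef) (F : Matrix m n ℝ)
    (H : Matrix p n ℝ) :
    Real.log (F * (P⁻¹ + Hᵀ * R⁻¹ * H)⁻¹ * Fᵀ + Q).det + Real.log (H * P * Hᵀ + R).det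
      = Real.log Q.det + Real.log R.det + Real.log P.det
        + Real.log (P⁻¹ + Hᵀ * R⁻¹ * H + Fᵀ * Q⁻¹ * F).det := by
  set K := P⁻¹ + Hᵀ * R⁻¹ * H
  have hK : K.PosDef := hP.inv.add_posSemidef (hR.inv.posSemidef.transpose_mul_mul_same H)
  have hN : (K + Fᵀ * Q⁻¹ * F).PosDef :=
    hK.add_posSemidef (hQ.inv.posSemidef.transpose_mul_mul_same F)
  have hpred : (F * K⁻¹ * Fᵀ + Q).det = Q.det * K.det⁻¹ * (K + Fᵀ * Q⁻¹ * F).det := by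
    rw [det_mul_mul_add hQ.isUnit_det hK.inv.isUnit_det, nonsing_inv_nonsing_inv _ hK.isUnit_det,
      det_nonsing_inv, Ring.inverse_eq_inv']
  have hinnov : (H * P * Hᵀ + R).det = R.det * P.det * K.det :=
    det_mul_mul_add hR.isUnit_det hP.isUnit_det H Hᵀ
  have hQK : Q.det * K.det⁻¹ ≠ 0 := (mul_pos hQ.det_pos (inv_pos.2 hK.det_pos)).ne'
  have hRP : R.det * P.det ≠ 0 := (mul_pos hR.det_pos hP.det_pos).ne'
  rw [hpred, hinnov, Real.log_mul hQK hN.det_pos.ne', Real.log_mul hRP hK.det_pos.ne',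
    Real.log_mul hQ.det_pos.ne' (inv_ne_zero hK.det_pos.ne'), Real.log_inv,
    Real.log_mul hR.det_pos.ne' hP.det_pos.ne']
  ring

end Determinants

end Matrix

section KalmanUpdate

variable {m p : ℕ} {F Q P P' : Matrix (Fin m) (Fin m) ℝ} {H : Matrix (Fin p) (Fin m) ℝ}
  {R : Matrix (Fin p) (Fin p) ℝ}

lemma kalmanUpdate_eq_kalmanUpdate_true (b : Bool) :
    kalmanUpdate F Q H R P b = kalmanUpdate F Q (if b then H else 0) R P true := by
  cases b <;> simp [kalmanUpdate]

lemma lyapUpdate_eq_kalmanUpdate_false : lyapUpdate F Q P = kalmanUpdate F Q H R P false := by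
  simp [kalmanUpdate, lyapUpdate]

lemma lyapUpdate_mono (h : P ≤ P') : lyapUpdate F Q P ≤ lyapUpdate F Q P' :=
  add_le_add_left (Matrix.mul_mul_transpose_le_mul_mul_transpose h F) Q

lemma kalmanUpdate_true_eq (hP : P.PosDef) (hR : R.PosDef) :
    kalmanUpdate F Q H R P true = F * (P⁻¹ + Hᵀ * R⁻¹ * H)⁻¹ * Fᵀ + Q := by
  rw [Matrix.inv_add_transpose_mul_mul hP hR]
  simp only [kalmanUpdate, if_true, Matrix.mul_sub, Matrix.sub_mul, Matrix.mul_assoc]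
  abel

lemma posDef_kalmanUpdate (hP : P.PosDef) (hQ : Q.PosDef) (hR : R.PosDef) (b : Bool) :
    (kalmanUpdate F Q H R P b).PosDef := by
  rw [kalmanUpdate_eq_kalmanUpdate_true, kalmanUpdate_true_eq hP hR]
  have hK := hP.inv.add_posSemidef (hR.inv.posSemidef.transpose_mul_mul_same (if b then H else 0))
  exact .posSemidef_add (hK.inv.posSemidef.mul_mul_transpose_same F) hQ

lemma kalmanUpdate_mono (hP : P.PosDef) (hR : R.PosDef) (h : P ≤ P') (b : Bool) :
    kalmanUpdate F Q H R P b ≤ kalmanUpdate F Q H R P' b := by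
  have hP' := hP.of_le h
  rw [kalmanUpdate_eq_kalmanUpdate_true b, kalmanUpdate_eq_kalmanUpdate_true b,
    kalmanUpdate_true_eq hP hR, kalmanUpdate_true_eq hP' hR]
  set G := (if b then H else 0)ᵀ * R⁻¹ * (if b then H else 0)
  have hK' : (P'⁻¹ + G).PosDef :=
    hP'.inv.add_posSemidef (hR.inv.posSemidef.transpose_mul_mul_same _)
  exact add_le_add_left (Matrix.mul_mul_transpose_le_mul_mul_transpose
    (hK'.inv_le_inv (add_le_add_left (hP.inv_le_inv h) G)) F) Q

lemma log_det_kalmanUpdate_sub_log_det_le (hP : P.PosDef) (hQ : Q.PosDef) (hR : R.PosDef)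
    (h : P ≤ P') (b : Bool) :
    Real.log (kalmanUpdate F Q H R P' b).det - Real.log P'.det
      ≤ Real.log (kalmanUpdate F Q H R P b).det - Real.log P.det := by
  have hP' := hP.of_le h
  rw [kalmanUpdate_eq_kalmanUpdate_true b, kalmanUpdate_eq_kalmanUpdate_true b,
    kalmanUpdate_true_eq hP hR, kalmanUpdate_true_eq hP' hR]
  set H' := if b then H else 0
  have hgain := Matrix.log_det_mul_inv_add_mul_transpose_add hP hQ hR F H'
  have hgain' := Matrix.log_det_mul_inv_add_mul_transpose_add hP' hQ hR F H'
  have hinfo : Real.log (P'⁻¹ + H'ᵀ * R⁻¹ * H' + Fᵀ * Q⁻¹ * F).det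
      ≤ Real.log (P⁻¹ + H'ᵀ * R⁻¹ * H' + Fᵀ * Q⁻¹ * F).det := by
    refine Matrix.PosDef.log_det_le_log_det ?_ (add_le_add_left (add_le_add_left
      (hP.inv_le_inv h) _) _)
    exact (hP'.inv.add_posSemidef (hR.inv.posSemidef.transpose_mul_mul_same H')).add_posSemidef
      (hQ.inv.posSemidef.transpose_mul_mul_same F)
  have hinnov : Real.log (H' * P * H'ᵀ + R).det ≤ Real.log (H' * P' * H'ᵀ + R).det :=
    Matrix.PosDef.log_det_le_log_det (.posSemidef_add (hP.posSemidef.mul_mul_transpose_same H') hR)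
      (add_le_add_left (Matrix.mul_mul_transpose_le_mul_mul_transpose h H') R)
  linarith

end KalmanUpdate

section StoppingCost

noncomputable def targetCost {n : Type*} [Fintype n] [DecidableEq n] (α β : ℝ)
    (X Y : Matrix n n ℝ) : ℝ :=
  β * Real.log X.det - α * Real.log Y.det

lemma targetCost_le_targetCost {n : Type*} [Fintype n] [DecidableEq n] {α β : ℝ} (hα : 0 ≤ α)
    (hβ : 0 ≤ β) {X X' Y Y' : Matrix n n ℝ} (hX : X.PosDef) (hY' : Y'.PosDef) (hXX' : X ≤ X')
    (hYY' : Y' ≤ Y) : targetCost α β X Y ≤ targetCost α β X' Y' := by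
  have hlogX := mul_le_mul_of_nonneg_left (hX.log_det_le_log_det hXX') hβ
  have hlogY := mul_le_mul_of_nonneg_left (hY'.log_det_le_log_det hYY') hα
  unfold targetCost
  linarith

variable {L m p : ℕ}

lemma targetCost_step_sub_le {α β : ℝ} (hα : 0 ≤ α) (hβ : 0 ≤ β)
    {F Q X X' Y Y' : Matrix (Fin m) (Fin m) ℝ} {H : Matrix (Fin p) (Fin m) ℝ}
    {R : Matrix (Fin p) (Fin p) ℝ} (hQ : Q.PosDef) (hR : R.PosDef) (hX : X.PosDef)
    (hY' : Y'.PosDef) (hXX' : X ≤ X') (hYY' : Y' ≤ Y) (b : Bool) :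
    targetCost α β (kalmanUpdate F Q H R X' b) (lyapUpdate F Q Y') - targetCost α β X' Y'
      ≤ targetCost α β (kalmanUpdate F Q H R X b) (lyapUpdate F Q Y) - targetCost α β X Y := by
  have hkalman := log_det_kalmanUpdate_sub_log_det_le (F := F) (H := H) hX hQ hR hXX' b
  have hlyap := log_det_kalmanUpdate_sub_log_det_le (F := F) (H := H) hY' hQ hR hYY' false
  rw [← lyapUpdate_eq_kalmanUpdate_false, ← lyapUpdate_eq_kalmanUpdate_false] at hlyap
  have := mul_le_mul_of_nonneg_left hkalman hβ
  have := mul_le_mul_of_nonneg_left hlyap hα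
  unfold targetCost
  linarith

lemma stopCost_eq_targetCost_sub_sum (a : Fin L) (α β : Fin L → ℝ)
    (P Pbar : Fin L → Matrix (Fin m) (Fin m) ℝ) :
    stopCost a α β P Pbar = targetCost (α a) (β a) (P a) (Pbar a)
      - ∑ l ∈ Finset.univ.erase a, targetCost (α l) (β l) (P l) (Pbar l) := by
  rw [sub_eq_add_neg, ← Finset.sum_neg_distrib]
  simp only [stopCost, targetCost, neg_sub]
  ring

/-- The order on states along which the stopping cost increases. -/
def StateLE (a : Fin L) (P Pbar P' Pbar' : Fin L → Matrix (Fin m) (Fin m) ℝ) : Prop :=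
  (P a ≤ P' a ∧ Pbar' a ≤ Pbar a) ∧ ∀ l ≠ a, P' l ≤ P l ∧ Pbar l ≤ Pbar' l

def PosDefState (P Pbar : Fin L → Matrix (Fin m) (Fin m) ℝ) : Prop :=
  ∀ l, (P l).PosDef ∧ (Pbar l).PosDef

noncomputable def kalmanStep (F Q : Fin L → Matrix (Fin m) (Fin m) ℝ)
    (H : Fin L → Matrix (Fin p) (Fin m) ℝ) (R : Fin L → Matrix (Fin p) (Fin p) ℝ)
    (b : Fin L → Bool) (P : Fin L → Matrix (Fin m) (Fin m) ℝ) : Fin L → Matrix (Fin m) (Fin m) ℝ :=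
  fun l => kalmanUpdate (F l) (Q l) (H l) (R l) (P l) (b l)

noncomputable def lyapStep (F Q Pbar : Fin L → Matrix (Fin m) (Fin m) ℝ) :
    Fin L → Matrix (Fin m) (Fin m) ℝ :=
  fun l => lyapUpdate (F l) (Q l) (Pbar l)

variable {a : Fin L} {α β : Fin L → ℝ} {F Q : Fin L → Matrix (Fin m) (Fin m) ℝ}
  {H : Fin L → Matrix (Fin p) (Fin m) ℝ} {R : Fin L → Matrix (Fin p) (Fin p) ℝ}
  {P Pbar P' Pbar' : Fin L → Matrix (Fin m) (Fin m) ℝ}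

lemma PosDefState.step (hQ : ∀ l, (Q l).PosDef) (hR : ∀ l, (R l).PosDef)
    (hS : PosDefState P Pbar) (b : Fin L → Bool) :
    PosDefState (kalmanStep F Q H R b P) (lyapStep F Q Pbar) := fun l =>
  ⟨posDef_kalmanUpdate (hS l).1 (hQ l) (hR l) (b l),
    .posSemidef_add ((hS l).2.posSemidef.mul_mul_transpose_same (F l)) (hQ l)⟩

lemma StateLE.step (hR : ∀ l, (R l).PosDef) (hS : PosDefState P Pbar)
    (hS' : PosDefState P' Pbar') (h : StateLE a P Pbar P' Pbar') (b : Fin L → Bool) :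
    StateLE a (kalmanStep F Q H R b P) (lyapStep F Q Pbar)
      (kalmanStep F Q H R b P') (lyapStep F Q Pbar') :=
  ⟨⟨kalmanUpdate_mono (hS a).1 (hR a) h.1.1 (b a), lyapUpdate_mono h.1.2⟩, fun l hl =>
    ⟨kalmanUpdate_mono (hS' l).1 (hR l) (h.2 l hl).1 (b l), lyapUpdate_mono (h.2 l hl).2⟩⟩

lemma stopCost_le_stopCost (hα : ∀ l, 0 ≤ α l) (hβ : ∀ l, 0 ≤ β l) (hS : PosDefState P Pbar)
    (hS' : PosDefState P' Pbar') (h : StateLE a P Pbar P' Pbar') :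
    stopCost a α β P Pbar ≤ stopCost a α β P' Pbar' := by
  have htarget := targetCost_le_targetCost (hα a) (hβ a) (hS a).1 (hS' a).2 h.1.1 h.1.2
  have hothers : ∑ l ∈ Finset.univ.erase a, targetCost (α l) (β l) (P' l) (Pbar' l)
      ≤ ∑ l ∈ Finset.univ.erase a, targetCost (α l) (β l) (P l) (Pbar l) :=
    Finset.sum_le_sum fun l hl => have hl := Finset.ne_of_mem_erase hl
      targetCost_le_targetCost (hα l) (hβ l) (hS' l).1 (hS l).2 (h.2 l hl).1 (h.2 l hl).2
  rw [stopCost_eq_targetCost_sub_sum, stopCost_eq_targetCost_sub_sum]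
  linarith

lemma stopCost_step_sub_le (hα : ∀ l, 0 ≤ α l) (hβ : ∀ l, 0 ≤ β l) (hQ : ∀ l, (Q l).PosDef)
    (hR : ∀ l, (R l).PosDef) (hS : PosDefState P Pbar) (hS' : PosDefState P' Pbar')
    (h : StateLE a P Pbar P' Pbar') (b : Fin L → Bool) :
    stopCost a α β (kalmanStep F Q H R b P') (lyapStep F Q Pbar') - stopCost a α β P' Pbar'
      ≤ stopCost a α β (kalmanStep F Q H R b P) (lyapStep F Q Pbar) - stopCost a α β P Pbar := by
  have htarget := targetCost_step_sub_le (F := F a) (H := H a) (hα a) (hβ a) (hQ a) (hR a)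
    (hS a).1 (hS' a).2 h.1.1 h.1.2 (b a)
  have hothers := Finset.sum_le_sum fun l (hl : l ∈ Finset.univ.erase a) =>
    have hl := Finset.ne_of_mem_erase hl
    targetCost_step_sub_le (F := F l) (H := H l) (hα l) (hβ l) (hQ l) (hR l) (hS' l).1 (hS l).2
      (h.2 l hl).1 (h.2 l hl).2 (b l)
  simp only [Finset.sum_sub_distrib] at hothers
  simp only [stopCost_eq_targetCost_sub_sum, kalmanStep, lyapStep]
  linarith

end StoppingCost

section ValueIteration

variable {L m p : ℕ} {a : Fin L} {α β : Fin L → ℝ} {c : ℝ}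
  {F Q : Fin L → Matrix (Fin m) (Fin m) ℝ} {H : Fin L → Matrix (Fin p) (Fin m) ℝ}
  {R : Fin L → Matrix (Fin p) (Fin p) ℝ} {pd : Fin L → ℝ}
  {P Pbar P' Pbar' : Fin L → Matrix (Fin m) (Fin m) ℝ}

lemma detWeight_nonneg (hpd : ∀ l, pd l ∈ Set.Icc (0 : ℝ) 1) (b : Fin L → Bool) :
    0 ≤ detWeight pd b :=
  Finset.prod_nonneg fun l _ => by
    cases b l
    · exact sub_nonneg.2 (hpd l).2
    · exact (hpd l).1

lemma sum_detWeight (pd : Fin L → ℝ) : ∑ b : Fin L → Bool, detWeight pd b = 1 :=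
  calc ∑ b, detWeight pd b = ∏ l, ∑ x : Bool, if x then pd l else 1 - pd l :=
        (Fintype.prod_sum fun l (x : Bool) => if x then pd l else 1 - pd l).symm
    _ = 1 := by simp

lemma contCost_add_sum_eq (V : (Fin L → Bool) → ℝ) :
    contCost a α β c F Q H R pd P Pbar + ∑ b, detWeight pd b * V b
      = c + ∑ b, detWeight pd b * (stopCost a α β (kalmanStep F Q H R b P) (lyapStep F Q Pbar)
          - stopCost a α β P Pbar + V b) := by
  unfold contCost kalmanStep lyapStep
  simp only [mul_add, mul_sub, Finset.sum_add_distrib,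
    Finset.sum_sub_distrib, ← Finset.sum_mul, sum_detWeight]
  ring

lemma contCost_add_sum_le (hα : ∀ l, 0 ≤ α l) (hβ : ∀ l, 0 ≤ β l) (hQ : ∀ l, (Q l).PosDef)
    (hR : ∀ l, (R l).PosDef) (hpd : ∀ l, pd l ∈ Set.Icc (0 : ℝ) 1) (hS : PosDefState P Pbar)
    (hS' : PosDefState P' Pbar') (h : StateLE a P Pbar P' Pbar') {V V' : (Fin L → Bool) → ℝ}
    (hV : ∀ b, V' b ≤ V b) :
    contCost a α β c F Q H R pd P' Pbar' + ∑ b, detWeight pd b * V' b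
      ≤ contCost a α β c F Q H R pd P Pbar + ∑ b, detWeight pd b * V b := by
  rw [contCost_add_sum_eq, contCost_add_sum_eq]
  refine add_le_add_right (Finset.sum_le_sum fun b _ => ?_) c
  refine mul_le_mul_of_nonneg_left ?_ (detWeight_nonneg hpd b)
  linarith [stopCost_step_sub_le (F := F) (H := H) hα hβ hQ hR hS hS' h b, hV b]

lemma valIter_antitone (hα : ∀ l, 0 ≤ α l) (hβ : ∀ l, 0 ≤ β l) (hQ : ∀ l, (Q l).PosDef)
    (hR : ∀ l, (R l).PosDef) (hpd : ∀ l, pd l ∈ Set.Icc (0 : ℝ) 1) (k : ℕ)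
    (hS : PosDefState P Pbar) (hS' : PosDefState P' Pbar') (h : StateLE a P Pbar P' Pbar') :
    valIter a α β c F Q H R pd k P' Pbar' ≤ valIter a α β c F Q H R pd k P Pbar := by
  induction k generalizing P Pbar P' Pbar' with
  | zero => exact neg_le_neg (stopCost_le_stopCost hα hβ hS hS' h)
  | succ k ih =>
    refine min_le_min_left 0 (contCost_add_sum_le hα hβ hQ hR hpd hS hS' h fun b => ?_)
    exact ih (hS.step hQ hR b) (hS'.step hQ hR b) (h.step hR hS hS' b)

noncomputable def contValue (a : Fin L) (α β : Fin L → ℝ) (c : ℝ)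
    (F Q : Fin L → Matrix (Fin m) (Fin m) ℝ) (H : Fin L → Matrix (Fin p) (Fin m) ℝ)
    (R : Fin L → Matrix (Fin p) (Fin p) ℝ) (pd : Fin L → ℝ) (k : ℕ)
    (P Pbar : Fin L → Matrix (Fin m) (Fin m) ℝ) : ℝ :=
  contCost a α β c F Q H R pd P Pbar
    + ∑ b, detWeight pd b * valIter a α β c F Q H R pd k (kalmanStep F Q H R b P)
        (lyapStep F Q Pbar)

lemma valIterPolicy_eq (k : ℕ) :
    valIterPolicy a α β c F Q H R pd k P Pbar
      = if 0 ≤ contValue a α β c F Q H R pd k P Pbar then 1 else 2 :=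
  rfl

lemma contValue_antitone (hα : ∀ l, 0 ≤ α l) (hβ : ∀ l, 0 ≤ β l) (hQ : ∀ l, (Q l).PosDef)
    (hR : ∀ l, (R l).PosDef) (hpd : ∀ l, pd l ∈ Set.Icc (0 : ℝ) 1) (k : ℕ)
    (hS : PosDefState P Pbar) (hS' : PosDefState P' Pbar') (h : StateLE a P Pbar P' Pbar') :
    contValue a α β c F Q H R pd k P' Pbar' ≤ contValue a α β c F Q H R pd k P Pbar :=
  contCost_add_sum_le hα hβ hQ hR hpd hS hS' h fun b =>
    valIter_antitone hα hβ hQ hR hpd k (hS.step hQ hR b) (hS'.step hQ hR b) (h.step hR hS hS' b)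

end ValueIteration

theorem valIterPolicy_monotone_general {L m p : ℕ} (a : Fin L)
    (α β : Fin L → ℝ) (hα : ∀ l, 0 ≤ α l) (hβ : ∀ l, 0 ≤ β l) (c : ℝ)
    (F Q : Fin L → Matrix (Fin m) (Fin m) ℝ)
    (H : Fin L → Matrix (Fin p) (Fin m) ℝ)
    (R : Fin L → Matrix (Fin p) (Fin p) ℝ)
    (hQ : ∀ l, (Q l).PosDef) (hR : ∀ l, (R l).PosDef)
    (pd : Fin L → ℝ) (hpd : ∀ l, pd l ∈ Set.Icc (0 : ℝ) 1)
    (k : ℕ)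
    (P Pbar P' Pbar' : Fin L → Matrix (Fin m) (Fin m) ℝ)
    (hP : ∀ l, (P l).PosDef) (hPbar : ∀ l, (Pbar l).PosDef)
    (hP' : ∀ l, (P' l).PosDef) (hPbar' : ∀ l, (Pbar' l).PosDef)
    (ha1 : (P' a - P a).PosSemidef) (ha2 : (Pbar a - Pbar' a).PosSemidef)
    (hl1 : ∀ l, l ≠ a → (P l - P' l).PosSemidef)
    (hl2 : ∀ l, l ≠ a → (Pbar' l - Pbar l).PosSemidef)
    (hcont : valIterPolicy a α β c F Q H R pd k P Pbar = 2) :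
    valIterPolicy a α β c F Q H R pd k P' Pbar' = 2 := by
  have hle := contValue_antitone (c := c) (F := F) (H := H) hα hβ hQ hR hpd k
    (fun l => ⟨hP l, hPbar l⟩) (fun l => ⟨hP' l, hPbar' l⟩)
    ⟨⟨ha1, ha2⟩, fun l hl => ⟨hl1 l hl, hl2 l hl⟩⟩
  rw [valIterPolicy_eq, ite_eq_right_iff] at hcont ⊢
  exact fun hstop => hcont (hstop.trans hle)

/-- The value-iteration policy `μ_{k+1}` is monotone: it is increasing in `P_a` and in
`P̄_l` (`l ≠ a`) and decreasing in `P̄_a` and in `P_l` (`l ≠ a`) with respect to the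
Loewner order.  Equivalently, if `μ_{k+1}(P, P̄) = 2` (continue) and `(P', P̄')`
satisfies `P'_a ⪰ P_a`, `P̄'_a ⪯ P̄_a`, and `P'_l ⪯ P_l`, `P̄'_l ⪰ P̄_l` for every
`l ≠ a`, then `μ_{k+1}(P', P̄') = 2`. -/
theorem valIterPolicy_monotone {L m p : ℕ} (hL : 2 ≤ L) (a : Fin L)
    (α β : Fin L → ℝ) (hα : ∀ l, 0 ≤ α l) (hβ : ∀ l, 0 ≤ β l) (c : ℝ)
    (F Q : Fin L → Matrix (Fin m) (Fin m) ℝ)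
    (H : Fin L → Matrix (Fin p) (Fin m) ℝ)
    (R : Fin L → Matrix (Fin p) (Fin p) ℝ)
    (hQ : ∀ l, (Q l).PosDef) (hR : ∀ l, (R l).PosDef)
    (pd : Fin L → ℝ) (hpd : ∀ l, pd l ∈ Set.Icc (0 : ℝ) 1)
    (k : ℕ)
    (P Pbar P' Pbar' : Fin L → Matrix (Fin m) (Fin m) ℝ)
    (hP : ∀ l, (P l).PosDef) (hPbar : ∀ l, (Pbar l).PosDef)
    (hP' : ∀ l, (P' l).PosDef) (hPbar' : ∀ l, (Pbar' l).PosDef)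
    (ha1 : (P' a - P a).PosSemidef) (ha2 : (Pbar a - Pbar' a).PosSemidef)
    (hl1 : ∀ l, l ≠ a → (P l - P' l).PosSemidef)
    (hl2 : ∀ l, l ≠ a → (Pbar' l - Pbar l).PosSemidef)
    (hcont : valIterPolicy a α β c F Q H R pd k P Pbar = 2) :
    valIterPolicy a α β c F Q H R pd k P' Pbar' = 2 :=
  valIterPolicy_monotone_general a α β hα hβ c F Q H R hQ hR pd hpd k P Pbar P' Pbar' hP hPbar hP'
    hPbar' ha1 ha2 hl1 hl2 hcont
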